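/- arXiv:1506.02629 — 5 statements merged into one kernel-verified Lean document; each statement's English description precedes it below -/
import Mathlib

section
/- Let 𝒳 be a finite set and let A be a randomized algorithm with domain 𝒳^n and finite range 𝒴. Then the (pure) max-information of A, I_∞(A,n), equals max over all pairs of datasets S, S' ∈ 𝒳^n of the max-divergence D_∞(A(S) ‖ A(S')). -/
open scoped ENNReal

/-- Probability of an event under a PMF. -/
noncomputable def pr {Z : Type*} (p : PMF Z) (O : Set Z) : ℝ≥0∞ :=
  p.toOuterMeasure O

/-- Product of two independent PMFs. -/
noncomputable def pmfPair {A B : Type*} (p : PMF A) (q : PMF B) : PMF (A × B) :=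
  p.bind fun a => q.map fun b => (a, b)

/-- Joint distribution of (input, output) for a randomized algorithm `f`
applied to a random input `μ`. -/
noncomputable def joint {A B : Type*} (μ : PMF A) (f : A → PMF B) : PMF (A × B) :=
  μ.bind fun a => (f a).map fun b => (a, b)

/-- Product of the marginals of input and output. -/
noncomputable def indepProd {A B : Type*} (μ : PMF A) (f : A → PMF B) : PMF (A × B) :=
  pmfPair μ (μ.bind f)

/-- The max-divergence `D_∞(p ‖ q) = log max_z p(z)/q(z)`.  (We use the
natural logarithm `ENNReal.log`; a change of base multiplies both sides of the
equality below by the same positive constant, so the statement is equivalent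
to the one with base-2 logarithms.) -/
noncomputable def maxDiv {Z : Type*} (p q : PMF Z) : EReal :=
  ENNReal.log (⨆ z : Z, p z / q z)

/- ------------------- auxiliary lemmas ------------------- -/

noncomputable def logIso : ℝ≥0∞ ≃o EReal :=
  StrictMono.orderIsoOfSurjective ENNReal.log ENNReal.log_strictMono ENNReal.log_surjective

lemma log_iSup' {ι : Sort*} (f : ι → ℝ≥0∞) :
    ENNReal.log (⨆ i, f i) = ⨆ i, ENNReal.log (f i) :=
  OrderIso.map_iSup logIso f

lemma bindMap_apply {α β : Type*} (μ : PMF α) (f : α → PMF β) (a : α) (b : β) :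
    (μ.bind fun a' => (f a').map fun b' => (a', b')) (a, b) = μ a * f a b := by
  classical
  simp only [PMF.bind_apply, PMF.map_apply, Prod.mk.injEq]
  rw [tsum_eq_single a]
  · congr 1
    rw [tsum_eq_single b]
    · simp
    · intro b' hb'; simp [hb'.symm]
  · intro a' ha'
    rw [tsum_eq_single b]
    · simp [ha'.symm]
    · intro b' hb'; simp [hb'.symm]

lemma joint_apply' {α β : Type*} (μ : PMF α) (f : α → PMF β) (a : α) (b : β) :
    joint μ f (a, b) = μ a * f a b :=
  bindMap_apply μ f a b

lemma indepProd_apply' {α β : Type*} (μ : PMF α) (f : α → PMF β) (a : α) (b : β) :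
    indepProd μ f (a, b) = μ a * μ.bind f b :=
  bindMap_apply μ (fun _ => μ.bind f) a b

noncomputable def mixPMF {α : Type*} [Fintype α] [DecidableEq α] (S S' : α) (h : S ≠ S')
    (ε : ℝ≥0∞) (hε : ε ≤ 1) : PMF α :=
  PMF.ofFintype (fun s => if s = S then ε else if s = S' then 1 - ε else 0) (by
    rw [← Finset.sum_subset (Finset.subset_univ ({S, S'} : Finset α))
      (fun x _ hx => by
        simp only [Finset.mem_insert, Finset.mem_singleton, not_or] at hx
        simp [hx.1, hx.2])]
    rw [Finset.sum_pair h]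
    simp only [if_pos rfl, if_neg h.symm]
    exact add_tsub_cancel_of_le hε)

lemma mixPMF_apply_left {α : Type*} [Fintype α] [DecidableEq α] {S S' : α} (h : S ≠ S')
    {ε : ℝ≥0∞} (hε : ε ≤ 1) : mixPMF S S' h ε hε S = ε := by
  simp [mixPMF, PMF.ofFintype_apply]

lemma mixPMF_bind {α β : Type*} [Fintype α] [DecidableEq α] {S S' : α} (h : S ≠ S')
    {ε : ℝ≥0∞} (hε : ε ≤ 1) (f : α → PMF β) (y : β) :
    (mixPMF S S' h ε hε).bind f y = ε * f S y + (1 - ε) * f S' y := by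
  rw [PMF.bind_apply, tsum_fintype]
  rw [← Finset.sum_subset (Finset.subset_univ ({S, S'} : Finset α))
    (fun x _ hx => by
      simp only [Finset.mem_insert, Finset.mem_singleton, not_or] at hx
      simp [mixPMF, PMF.ofFintype_apply, hx.1, hx.2])]
  rw [Finset.sum_pair h]
  simp [mixPMF, PMF.ofFintype_apply, h.symm]

lemma div_le_iSup_aux (a b : ℝ≥0∞) :
    a / b = ⨆ k : ℕ, a / (((k:ℝ≥0∞)+2)⁻¹ + b) := by
  have htop : (⨆ k : ℕ, (k:ℝ≥0∞)+2) = ⊤ := by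
    rw [eq_top_iff, ← ENNReal.iSup_natCast]
    exact iSup_mono fun k => le_self_add
  have h1 : (⨅ k : ℕ, ((k:ℝ≥0∞)+2)⁻¹ + b) = b := by
    rw [← ENNReal.iInf_add, ← ENNReal.inv_iSup, htop, ENNReal.inv_top, zero_add]
  rw [div_eq_mul_inv]
  conv_lhs => rw [← h1]
  rw [ENNReal.inv_iInf, ENNReal.mul_iSup]
  simp_rw [div_eq_mul_inv]

lemma key_ennreal {α β : Type*} [Fintype α] [Fintype β] (A : α → PMF β) :
    (⨆ μ : PMF α, ⨆ s : α, ⨆ y : β, (μ s * A s y) / (μ s * μ.bind A y))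
      = ⨆ S : α, ⨆ S' : α, ⨆ y : β, A S y / A S' y := by
  classical
  apply le_antisymm
  · refine iSup_le fun μ => iSup_le fun s => iSup_le fun y => ?_
    by_cases hs : μ s = 0
    · simp [hs]
    · obtain ⟨s₀, hs₀mem, hmin⟩ := Finset.exists_min_image
        (Finset.univ.filter fun s' => μ s' ≠ 0) (fun s' => A s' y)
        ⟨s, Finset.mem_filter.mpr ⟨Finset.mem_univ _, hs⟩⟩
      have hB : A s₀ y ≤ μ.bind A y := by
        calc A s₀ y = (∑' s' : α, μ s') * A s₀ y := by rw [μ.tsum_coe, one_mul]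
          _ = ∑' s' : α, μ s' * A s₀ y := by rw [ENNReal.tsum_mul_right]
          _ ≤ ∑' s' : α, μ s' * A s' y := ENNReal.tsum_le_tsum fun s' => by
              by_cases h : μ s' = 0
              · simp [h]
              · exact mul_le_mul_right
                  (hmin s' (Finset.mem_filter.mpr ⟨Finset.mem_univ _, h⟩)) _
          _ = μ.bind A y := by rw [PMF.bind_apply]
      calc μ s * A s y / (μ s * μ.bind A y) = A s y / μ.bind A y :=
            ENNReal.mul_div_mul_left _ _ hs (μ.apply_ne_top s)
        _ ≤ A s y / A s₀ y := ENNReal.div_le_div_left hB _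
        _ ≤ _ := by
            refine le_iSup_of_le s ?_
            refine le_iSup_of_le s₀ ?_
            exact le_iSup (fun y' => A s y' / A s₀ y') y
  · refine iSup_le fun S => iSup_le fun S' => iSup_le fun y => ?_
    by_cases hss : S = S'
    · subst hss
      refine le_iSup_of_le (PMF.pure S) (le_iSup_of_le S (le_iSup_of_le y (le_of_eq ?_)))
      simp [PMF.pure_bind]
    · have main : ∀ k : ℕ, A S y / (((k:ℝ≥0∞)+2)⁻¹ + A S' y)
          ≤ ⨆ μ : PMF α, ⨆ s : α, ⨆ y : β, (μ s * A s y) / (μ s * μ.bind A y) := by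
        intro k
        set ε : ℝ≥0∞ := ((k:ℝ≥0∞)+2)⁻¹ with hεdef
        have hbase0 : ((k:ℝ≥0∞)+2) ≠ 0 := by
          intro h; rw [add_eq_zero] at h; exact two_ne_zero h.2
        have hbasetop : ((k:ℝ≥0∞)+2) ≠ ⊤ :=
          ENNReal.add_ne_top.mpr ⟨ENNReal.natCast_ne_top k, by norm_num⟩
        have hε1 : ε ≤ 1 := by
          rw [hεdef]
          exact ENNReal.inv_le_one.mpr (le_trans one_le_two le_add_self)
        have hε0 : ε ≠ 0 := by rw [hεdef]; exact ENNReal.inv_ne_zero.mpr hbasetop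
        have hεtop : ε ≠ ⊤ := by rw [hεdef]; exact ENNReal.inv_ne_top.mpr hbase0
        set μ := mixPMF S S' hss ε hε1 with hμdef
        refine le_trans ?_ (le_iSup_of_le μ (le_iSup_of_le S (le_iSup _ y)))
        rw [hμdef, mixPMF_apply_left hss hε1, ENNReal.mul_div_mul_left _ _ hε0 hεtop]
        refine ENNReal.div_le_div_left ?_ _
        rw [mixPMF_bind]
        refine add_le_add ?_ ?_
        · calc ε * A S y ≤ ε * 1 := mul_le_mul_right (PMF.coe_le_one _ _) _
            _ = ε := mul_one _
        · calc (1 - ε) * A S' y ≤ 1 * A S' y := mul_le_mul_left tsub_le_self _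
            _ = A S' y := one_mul _
      calc A S y / A S' y = ⨆ k : ℕ, A S y / (((k:ℝ≥0∞)+2)⁻¹ + A S' y) :=
            div_le_iSup_aux _ _
        _ ≤ _ := iSup_le main

/-- For a randomized algorithm `A` on datasets of size `n` over a finite
set `X` with finite range `Y`, the (pure) max-information
`I_∞(A,n) = sup over distributions μ on datasets of D_∞((S, A(S)) ‖ S × A(S))`
equals the maximum over all pairs of datasets `S, S'` of `D_∞(A(S) ‖ A(S'))`. -/
theorem maxInfo_eq_sup_pairwise_maxDiv
    {X Y : Type*} [Fintype X] [Fintype Y] (n : ℕ)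
    (A : (Fin n → X) → PMF Y) :
    (⨆ μ : PMF (Fin n → X), maxDiv (joint μ A) (indepProd μ A))
      = ⨆ S : Fin n → X, ⨆ S' : Fin n → X, maxDiv (A S) (A S') := by
  have hL : ∀ μ : PMF (Fin n → X),
      (⨆ z : (Fin n → X) × Y, joint μ A z / indepProd μ A z)
        = ⨆ s : Fin n → X, ⨆ y : Y, (μ s * A s y) / (μ s * μ.bind A y) := by
    intro μ
    rw [iSup_prod]
    exact iSup_congr fun s => iSup_congr fun y => by
      rw [joint_apply', indepProd_apply']
  simp only [maxDiv, hL]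
  simp only [← log_iSup']
  exact congrArg ENNReal.log (key_ennreal A)
end

section
/- Let A be a randomized algorithm with domain 𝒳^n and finite range 𝒴, and let B be any (possibly randomized) algorithm with domain 𝒴 and finite range 𝒴'. Then for every random variable S over 𝒳^n and every β ≥ 0, I_∞^β(S; B(A(S))) ≤ I_∞^β(S; A(S)); that is, approximate max-information is preserved under post-processing. -/
open scoped ENNReal

/-- `D_∞^δ(p ‖ q) ≤ k` (δ-approximate max-divergence, log base 2). -/
def approxDivLe {Z : Type*} (p q : PMF Z) (δ k : ℝ) : Prop :=
  ∀ O : Set Z, ENNReal.ofReal δ < pr p O →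
    pr p O - ENNReal.ofReal δ ≤ (2 : ℝ≥0∞) ^ k * pr q O

/-- `I_∞^β(S; f(S)) ≤ k` for `S ∼ μ`. -/
def approxMaxInfoLe {A B : Type*} (μ : PMF A) (f : A → PMF B) (β k : ℝ) : Prop :=
  approxDivLe (joint μ f) (indepProd μ f) β k

open MeasureTheory Set

/-!
Post-processing by `B` is the same channel `(s, y) ↦ (s, B y)` applied to both the joint
distribution of `(S, A(S))` and to the product of its marginals, so it suffices to prove a
data-processing inequality for `D_∞^δ`. The probability of an event under `r.bind T` is the
`r`-average of the `[0, 1]`-valued function `z ↦ pr (T z) O`, and by the layer-cake formula that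
average is `∫₀¹ pr r {z | t < pr (T z) O} dt`; applying the hypothesis to each level set and
integrating gives the inequality, the `δ` loss being integrated over an interval of length one.
-/

lemma pr_le_one {Z : Type*} (p : PMF Z) (O : Set Z) : pr p O ≤ 1 := by
  rw [pr, PMF.toOuterMeasure_apply, ← p.tsum_coe]
  exact ENNReal.tsum_le_tsum fun z => indicator_le_self O p z

lemma volume_setOf_ofReal_lt_inter_Ioc {a : ℝ≥0∞} (ha : a ≤ 1) :
    volume ({t : ℝ | ENNReal.ofReal t < a} ∩ Ioc 0 1) = a := by
  have ha_top : a ≠ ⊤ := ne_top_of_le_ne_top ENNReal.one_ne_top ha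
  have hset : {t : ℝ | ENNReal.ofReal t < a} ∩ Ioc 0 1 = Ioo 0 a.toReal := by
    ext t
    simp only [mem_inter_iff, mem_ofPred_eq, mem_Ioc, mem_Ioo]
    constructor
    · rintro ⟨hlt, ht0, -⟩
      exact ⟨ht0, (ENNReal.ofReal_lt_iff_lt_toReal ht0.le ha_top).mp hlt⟩
    · rintro ⟨ht0, hlt⟩
      refine ⟨(ENNReal.ofReal_lt_iff_lt_toReal ht0.le ha_top).mpr hlt, ht0, ?_⟩
      exact hlt.le.trans (ENNReal.toReal_le_of_le_ofReal zero_le_one (by simpa using ha))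
  rw [hset, Real.volume_Ioo, sub_zero, ENNReal.ofReal_toReal ha_top]

lemma tsum_mul_eq_setLIntegral_pr {Z : Type*} (r : PMF Z) {g : Z → ℝ≥0∞} (hg : ∀ z, g z ≤ 1) :
    ∑' z, r z * g z = ∫⁻ t in Ioc (0 : ℝ) 1, pr r {z | ENNReal.ofReal t < g z} := by
  have : Countable r.support := r.support_countable.to_subtype
  set level : Z → ℝ → ℝ≥0∞ := fun z => {t | ENNReal.ofReal t < g z}.indicator fun _ => r z
  have hmeas : ∀ z, MeasurableSet {t : ℝ | ENNReal.ofReal t < g z} :=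
    fun z => measurableSet_lt ENNReal.measurable_ofReal measurable_const
  have hlevel : ∀ z, r z * g z = ∫⁻ t in Ioc (0 : ℝ) 1, level z t := fun z => by
    rw [lintegral_indicator_const (hmeas z), Measure.restrict_apply (hmeas z),
      volume_setOf_ofReal_lt_inter_Ioc (hg z)]
  have hsupp : ∀ (t : ℝ), Function.support (level · t) ⊆ r.support := fun t z hz => by
    by_contra h
    simp_all [level, indicator_apply]
  calc ∑' z, r z * g z = ∑' z : r.support, r z * g z :=
        (tsum_subtype_eq_of_support_subset (Function.support_mul_subset_left _ _)).symm
    _ = ∑' z : r.support, ∫⁻ t in Ioc (0 : ℝ) 1, level z t := tsum_congr fun z => hlevel z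
    _ = ∫⁻ t in Ioc (0 : ℝ) 1, ∑' z : r.support, level z t :=
        (lintegral_tsum (f := fun z : r.support => level z) fun z =>
          (measurable_const.indicator (hmeas z)).aemeasurable).symm
    _ = ∫⁻ t in Ioc (0 : ℝ) 1, pr r {z | ENNReal.ofReal t < g z} := by
        refine lintegral_congr fun t => ?_
        rw [tsum_subtype_eq_of_support_subset (hsupp t), pr, PMF.toOuterMeasure_apply]
        exact tsum_congr fun z => by simp only [level, indicator_apply, mem_ofPred_eq]

lemma pr_bind_eq_setLIntegral {Z W : Type*} (r : PMF Z) (T : Z → PMF W) (O : Set W) :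
    pr (r.bind T) O = ∫⁻ t in Ioc (0 : ℝ) 1, pr r {z | ENNReal.ofReal t < pr (T z) O} := by
  rw [pr, PMF.toOuterMeasure_bind_apply]
  exact tsum_mul_eq_setLIntegral_pr r fun z => pr_le_one (T z) O

lemma approxDivLe.bind {Z W : Type*} {p q : PMF Z} {δ k : ℝ} (h : approxDivLe p q δ k)
    (T : Z → PMF W) : approxDivLe (p.bind T) (q.bind T) δ k := by
  intro O _
  set level : ℝ → Set Z := fun t => {z | ENNReal.ofReal t < pr (T z) O}
  have hlevel : ∀ t, pr p (level t) - ENNReal.ofReal δ ≤ 2 ^ k * pr q (level t) := fun t => by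
    rcases le_or_gt (pr p (level t)) (ENNReal.ofReal δ) with hle | hlt
    · simp [tsub_eq_zero_of_le hle]
    · exact h (level t) hlt
  have hδ : ENNReal.ofReal δ = ∫⁻ _ in Ioc (0 : ℝ) 1, ENNReal.ofReal δ := by simp
  calc pr (p.bind T) O - ENNReal.ofReal δ
      = (∫⁻ t in Ioc (0 : ℝ) 1, pr p (level t)) - ∫⁻ _ in Ioc (0 : ℝ) 1, ENNReal.ofReal δ := by
        rw [pr_bind_eq_setLIntegral, ← hδ]
    _ ≤ ∫⁻ t in Ioc (0 : ℝ) 1, (pr p (level t) - ENNReal.ofReal δ) :=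
        lintegral_sub_le _ _ measurable_const
    _ ≤ ∫⁻ t in Ioc (0 : ℝ) 1, 2 ^ k * pr q (level t) := lintegral_mono hlevel
    _ = 2 ^ k * pr (q.bind T) O := by
        rw [lintegral_const_mul' _ _ (by simp [ENNReal.rpow_eq_top_iff]),
          pr_bind_eq_setLIntegral]

lemma joint_bind_eq_bind_joint {A B C : Type*} (μ : PMF A) (f : A → PMF B) (g : B → PMF C) :
    joint μ (fun a => (f a).bind g) = (joint μ f).bind fun z => (g z.2).map (Prod.mk z.1) := by
  simp only [joint, PMF.map_bind, PMF.bind_bind, PMF.bind_map]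
  rfl

lemma indepProd_bind_eq_bind_indepProd {A B C : Type*} (μ : PMF A) (f : A → PMF B)
    (g : B → PMF C) :
    indepProd μ (fun a => (f a).bind g)
      = (indepProd μ f).bind fun z => (g z.2).map (Prod.mk z.1) := by
  simp only [indepProd, pmfPair, PMF.map_bind, PMF.bind_bind, PMF.bind_map]
  rfl

theorem approxMaxInfo_postprocessing_general
    {X Y Y' : Type*} {n : ℕ}
    (μ : PMF (Fin n → X)) (A : (Fin n → X) → PMF Y) (B : Y → PMF Y')
    (β : ℝ) :
    ∀ k : ℝ, approxMaxInfoLe μ A β k →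
      approxMaxInfoLe μ (fun S => (A S).bind B) β k := by
  intro k hk
  rw [approxMaxInfoLe, joint_bind_eq_bind_joint, indepProd_bind_eq_bind_indepProd]
  exact hk.bind _

/-- approximate max-information is preserved under post-processing.
For any post-processing algorithm `B : 𝒴 → PMF 𝒴'`,
`I_∞^β(S; B(A(S))) ≤ I_∞^β(S; A(S))`, stated as: every upper bound `k` on the
β-approximate max-information of `(S, A(S))` is also an upper bound for `(S, B(A(S)))`. -/
theorem approxMaxInfo_postprocessing
    {X Y Y' : Type*} [Fintype X] [Fintype Y] [Fintype Y'] {n : ℕ}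
    (μ : PMF (Fin n → X)) (A : (Fin n → X) → PMF Y) (B : Y → PMF Y')
    (β : ℝ) (hβ : 0 ≤ β) :
    ∀ k : ℝ, approxMaxInfoLe μ A β k →
      approxMaxInfoLe μ (fun S => (A S).bind B) β k :=
  approxMaxInfo_postprocessing_general μ A B β
end

section
/- Let X and Y be two random variables over the same finite domain 𝒵. If Pr_{z ∼ X}[ Pr[X = z] / Pr[Y = z] ≥ 2^k ] ≤ β, then the β-approximate max-divergence satisfies D_∞^β(X ‖ Y) ≤ k. -/
open scoped ENNReal

/-!
Split an event `O` along the set `B` of outcomes where the likelihood ratio `p z / q z` reaches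
`2 ^ k`. Off `B` the bound `p z ≤ 2 ^ k * q z` holds pointwise, so `p (O \ B) ≤ 2 ^ k * q O`,
while `p (O ∩ B) ≤ p B ≤ β` by hypothesis.
-/

theorem ENNReal.le_mul_of_div_lt {a b c : ℝ≥0∞} (h : a / b < c) : a ≤ c * b := by
  rcases eq_or_ne b 0 with rfl | hb
  · rcases eq_or_ne a 0 with rfl | ha
    · simp
    · simp [ENNReal.div_zero ha] at h
  · exact (ENNReal.div_le_iff_le_mul (.inl hb) (.inr (pos_of_gt h).ne')).mp h.le

theorem pr_mono {Z : Type*} (p : PMF Z) {s t : Set Z} (h : s ⊆ t) : pr p s ≤ pr p t :=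
  MeasureTheory.measure_mono h

theorem pr_le_inter_add_sdiff {Z : Type*} (p : PMF Z) (s t : Set Z) :
    pr p s ≤ pr p (s ∩ t) + pr p (s \ t) :=
  MeasureTheory.measure_le_inter_add_sdiff p.toOuterMeasure s t

theorem pr_le_mul_pr_of_forall_le_mul {Z : Type*} {p q : PMF Z} {s : Set Z} {c : ℝ≥0∞}
    (h : ∀ z ∈ s, p z ≤ c * q z) : pr p s ≤ c * pr q s := by
  simp only [pr, PMF.toOuterMeasure_apply, ← ENNReal.tsum_mul_left]
  refine ENNReal.tsum_le_tsum fun z => ?_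
  by_cases hz : z ∈ s
  · simpa only [Set.indicator_of_mem hz] using h z hz
  · simp only [Set.indicator_of_notMem hz, mul_zero, le_refl]

theorem approxDiv_le_of_pointwise_ratio_general
    {Z : Type*} (p q : PMF Z) (k β : ℝ)
    (h : pr p {z : Z | (2 : ℝ≥0∞) ^ k ≤ p z / q z} ≤ ENNReal.ofReal β) :
    approxDivLe p q β k := by
  set B : Set Z := {z : Z | (2 : ℝ≥0∞) ^ k ≤ p z / q z}
  intro O _
  have h_off : pr p (O \ B) ≤ 2 ^ k * pr q O :=
    calc pr p (O \ B) ≤ 2 ^ k * pr q (O \ B) :=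
          pr_le_mul_pr_of_forall_le_mul fun z hz => ENNReal.le_mul_of_div_lt (not_le.mp hz.2)
      _ ≤ 2 ^ k * pr q O := by gcongr; exact pr_mono q Set.sdiff_subset
  have h_on : pr p (O ∩ B) ≤ ENNReal.ofReal β := (pr_mono p Set.inter_subset_right).trans h
  rw [tsub_le_iff_right]
  calc pr p O ≤ pr p (O ∩ B) + pr p (O \ B) := pr_le_inter_add_sdiff p O B
    _ ≤ 2 ^ k * pr q O + ENNReal.ofReal β := by rw [add_comm]; gcongr

/-- If `Pr_{z ∼ X}[ Pr[X = z] / Pr[Y = z] ≥ 2^k ] ≤ β`, then the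
β-approximate max-divergence satisfies `D_∞^β(X ‖ Y) ≤ k`. -/
theorem approxDiv_le_of_pointwise_ratio
    {Z : Type*} [Fintype Z] (p q : PMF Z) (k β : ℝ)
    (h : pr p {z : Z | (2 : ℝ≥0∞) ^ k ≤ p z / q z} ≤ ENNReal.ofReal β) :
    approxDivLe p q β k :=
  approxDiv_le_of_pointwise_ratio_general p q k β h
end

section
/- Let A be an ε-differentially private randomized algorithm with domain 𝒳^n and finite range 𝒴, let 𝒫 be a distribution over 𝒳, and let S be a random dataset drawn from the product distribution 𝒫^n (n i.i.d. samples). Then for any β > 0, the β-approximate max-information satisfies I_∞^β(S; A(S)) ≤ (log e) · ( ε² n / 2 + ε √( n ln(2/β) / 2 ) ). -/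
/-! Let `q` be the output marginal and `L = log (A S y / q y)` the privacy loss of `(S, y)` drawn
from the joint law. Revealing the samples one at a time, each one multiplies `E[exp (t L)]` by at
most `exp (t ε² / 2 + t² ε² / 8)`: under the weights tilted by the likelihood ratio `R` of that
sample, `log R` ranges over an interval of width `ε` (Hoeffding's lemma) and has mean
`E[R log R] ≤ ε² / 2`. A Chernoff bound with the optimal `t` makes `L > τ` an event of probability
at most `β / 2`, and off that event the joint law is at most `e^τ` times the product of the
marginals. -/

open scoped ENNReal

/-- Two datasets are adjacent if they differ in a single element. -/
def Adjacent {X : Type*} {n : ℕ} (S S' : Fin n → X) : Prop :=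
  ∃ i : Fin n, ∀ j : Fin n, j ≠ i → S j = S' j

/-- ε-differential privacy: for all adjacent datasets `S, S'` and every output `y`,
`Pr[A(S) = y] ≤ e^ε · Pr[A(S') = y]`. -/
def DiffPrivate {X Y : Type*} {n : ℕ} (A : (Fin n → X) → PMF Y) (ε : ℝ) : Prop :=
  ∀ S S' : Fin n → X, Adjacent S S' → ∀ y : Y,
    A S y ≤ ENNReal.ofReal (Real.exp ε) * A S' y

/-- The distribution of `n` i.i.d. samples from `P`. -/
noncomputable def iid {X : Type*} (P : PMF X) : (n : ℕ) → PMF (Fin n → X)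
  | 0 => PMF.pure fun i => i.elim0
  | n + 1 => (iid P n).bind fun S => P.map fun x => Fin.cons x S

open Real Finset

theorem Real.sinh_le_mul_cosh {x : ℝ} (hx : 0 ≤ x) : sinh x ≤ x * cosh x := by
  refine hasSum_le (fun k => ?_) (hasSum_sinh x) ((hasSum_cosh x).mul_left x)
  rw [← mul_div_assoc, ← pow_succ']
  gcongr
  omega

theorem Real.two_mul_cosh_sub_two_le {x : ℝ} (hx : 0 ≤ x) : 2 * cosh x - 2 ≤ x * sinh x := by
  have hx2 : 0 ≤ x / 2 := by positivity
  have h := mul_le_mul_of_nonneg_left (sinh_le_mul_cosh hx2) (sinh_nonneg_iff.2 hx2)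
  have hcosh := cosh_two_mul (x / 2)
  have hsinh := sinh_two_mul (x / 2)
  rw [mul_div_cancel₀ x two_ne_zero] at hcosh hsinh
  nlinarith [cosh_sq (x / 2)]

theorem ConvexOn.mul_le_secant {f : ℝ → ℝ} {a b x : ℝ} (hf : ConvexOn ℝ (Set.Icc a b) f)
    (hx : x ∈ Set.Icc a b) : (b - a) * f x ≤ (b - x) * f a + (x - a) * f b := by
  rcases hx.1.eq_or_lt with rfl | hax
  · simp
  rcases hx.2.eq_or_lt with rfl | hxb
  · simp
  exact hf.secant_mono_aux1 ⟨le_rfl, hx.1.trans hx.2⟩ ⟨hx.1.trans hx.2, le_rfl⟩ hax hxb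

section Weighted

variable {ι : Type*} [Fintype ι] {w : ι → ℝ}

theorem ConvexOn.mul_sum_le_secant {f : ℝ → ℝ} {a b : ℝ} (hf : ConvexOn ℝ (Set.Icc a b) f)
    {V : ι → ℝ} (hw : ∀ i, 0 ≤ w i) (hw1 : ∑ i, w i = 1) (hV : ∀ i, V i ∈ Set.Icc a b) :
    (b - a) * ∑ i, w i * f (V i)
      ≤ (b - ∑ i, w i * V i) * f a + (∑ i, w i * V i - a) * f b := by
  calc (b - a) * ∑ i, w i * f (V i) = ∑ i, w i * ((b - a) * f (V i)) := by
        rw [mul_sum]; exact sum_congr rfl fun i _ => by ring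
    _ ≤ ∑ i, w i * ((b - V i) * f a + (V i - a) * f b) :=
        sum_le_sum fun i _ => mul_le_mul_of_nonneg_left (hf.mul_le_secant (hV i)) (hw i)
    _ = (b * ∑ i, w i - ∑ i, w i * V i) * f a + (∑ i, w i * V i - a * ∑ i, w i) * f b := by
        simp only [mul_sum, sum_mul, ← sum_sub_distrib, ← sum_add_distrib]
        exact sum_congr rfl fun i _ => by ring
    _ = _ := by rw [hw1, mul_one, mul_one]

theorem sum_mul_exp_le_of_mem_Icc {V : ι → ℝ} {a b : ℝ} (hw : ∀ i, 0 ≤ w i)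
    (hw1 : ∑ i, w i = 1) (hV : ∀ i, V i ∈ Set.Icc a b) (t : ℝ) :
    ∑ i, w i * exp (t * V i) ≤ exp (t * ∑ i, w i * V i + t ^ 2 * (b - a) ^ 2 / 8) := by
  let _ : MeasurableSpace ι := ⊤
  let p : PMF ι := PMF.ofFintype (fun i => ENNReal.ofReal (w i)) (by
    rw [← ENNReal.ofReal_sum_of_nonneg fun i _ => hw i, hw1, ENNReal.ofReal_one])
  have hp (i : ι) : (p i).toReal = w i := ENNReal.toReal_ofReal (hw i)
  have h := (ProbabilityTheory.hasSubgaussianMGF_of_mem_Icc (μ := p.toMeasure) (X := V)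
    (measurable_of_finite V).aemeasurable (MeasureTheory.ae_of_all _ hV)).mgf_le t
  simp only [ProbabilityTheory.mgf, PMF.integral_eq_sum, hp, smul_eq_mul] at h
  set m := ∑ i, w i * V i
  have hvar : ((‖b - a‖₊ / 2) ^ 2 : NNReal) * t ^ 2 / 2 = t ^ 2 * (b - a) ^ 2 / 8 := by
    push_cast; rw [Real.norm_eq_abs, div_pow, sq_abs]; ring
  calc ∑ i, w i * exp (t * V i) = exp (t * m) * ∑ i, w i * exp (t * (V i - m)) := by
        rw [mul_sum]
        refine sum_congr rfl fun i _ => ?_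
        rw [mul_left_comm, ← exp_add]; ring_nf
    _ ≤ exp (t * m) * exp (t ^ 2 * (b - a) ^ 2 / 8) := by gcongr; rwa [← hvar]
    _ = _ := (exp_add _ _).symm

theorem mem_Icc_exp_of_le_exp_mul {R : ι → ℝ} {ε : ℝ} (hw : ∀ i, 0 ≤ w i)
    (hw1 : ∑ i, w i = 1) (hmean : ∑ i, w i * R i = 1) (hR : ∀ i j, R i ≤ exp ε * R j)
    (i : ι) : R i ∈ Set.Icc (exp (-ε)) (exp ε) := by
  have hconst (c : ℝ) : ∑ j, w j * c = c := by rw [← sum_mul, hw1, one_mul]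
  constructor
  · have h1 : 1 ≤ exp ε * R i := by
      rw [← hmean, ← hconst (exp ε * R i)]
      exact sum_le_sum fun j _ => mul_le_mul_of_nonneg_left (hR j i) (hw j)
    calc exp (-ε) = exp (-ε) * 1 := (mul_one _).symm
      _ ≤ exp (-ε) * (exp ε * R i) := by gcongr
      _ = R i := by rw [← mul_assoc, ← exp_add, neg_add_cancel, exp_zero, one_mul]
  · calc R i = ∑ j, w j * R i := (hconst _).symm
      _ ≤ ∑ j, w j * (exp ε * R j) :=
          sum_le_sum fun j _ => mul_le_mul_of_nonneg_left (hR i j) (hw j)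
      _ = exp ε := by simp_rw [mul_left_comm (w _), ← mul_sum, hmean, mul_one]

theorem sum_mul_mul_log_le {R : ι → ℝ} {ε : ℝ} (hε : 0 < ε) (hw : ∀ i, 0 ≤ w i)
    (hw1 : ∑ i, w i = 1) (hmean : ∑ i, w i * R i = 1)
    (hR : ∀ i, R i ∈ Set.Icc (exp (-ε)) (exp ε)) :
    ∑ i, w i * (R i * log (R i)) ≤ ε ^ 2 / 2 := by
  have hconvex : ConvexOn ℝ (Set.Icc (exp (-ε)) (exp ε)) fun x => x * log x :=
    convexOn_mul_log.subset (fun x hx => (exp_pos _).le.trans hx.1) (convex_Icc _ _)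
  have h := hconvex.mul_sum_le_secant hw hw1 hR
  rw [hmean, log_exp, log_exp] at h
  have hwidth : 0 < exp ε - exp (-ε) := by
    rw [sub_pos]; exact exp_lt_exp.2 (by linarith)
  have hprod : exp ε * exp (-ε) = 1 := by rw [← exp_add, add_neg_cancel, exp_zero]
  have hcosh := mul_le_mul_of_nonneg_left (two_mul_cosh_sub_two_le hε.le) hε.le
  rw [cosh_eq, sinh_eq] at hcosh
  -- the secant of `x log x` over `[e^{-ε}, e^ε]` takes the value `ε tanh (ε / 2)` at the mean `1`
  refine le_of_mul_le_mul_left (h.trans ?_) hwidth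
  nlinarith

theorem sum_mul_mul_rpow_le {R : ι → ℝ} {ε t : ℝ} (hε : 0 < ε) (ht : 0 ≤ t)
    (hw : ∀ i, 0 ≤ w i) (hw1 : ∑ i, w i = 1) (hmean : ∑ i, w i * R i = 1)
    (hR : ∀ i j, R i ≤ exp ε * R j) :
    ∑ i, w i * R i * R i ^ t ≤ exp (t * ε ^ 2 / 2 + t ^ 2 * ε ^ 2 / 8) := by
  have hbounds := mem_Icc_exp_of_le_exp_mul hw hw1 hmean hR
  have hpos (i : ι) : 0 < R i := (exp_pos _).trans_le (hbounds i).1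
  obtain ⟨j, -, hj⟩ := exists_min_image univ R
    (nonempty_of_sum_ne_zero (by rw [hw1]; exact one_ne_zero))
  have hlog (i : ι) : log (R i) ∈ Set.Icc (log (R j)) (log (R j) + ε) := by
    refine ⟨log_le_log (hpos j) (hj i (mem_univ i)), ?_⟩
    calc log (R i) ≤ log (exp ε * R j) := log_le_log (hpos i) (hR i j)
      _ = log (R j) + ε := by rw [log_mul (exp_pos ε).ne' (hpos j).ne', log_exp, add_comm]
  -- Hoeffding's lemma for `log R` under the tilted weights `w R`
  have hhoeffding := sum_mul_exp_le_of_mem_Icc (fun i => mul_nonneg (hw i) (hpos i).le)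
    hmean hlog t
  have hkl := sum_mul_mul_log_le hε hw hw1 hmean hbounds
  calc ∑ i, w i * R i * R i ^ t = ∑ i, w i * R i * exp (t * log (R i)) := by
        refine sum_congr rfl fun i _ => ?_
        rw [rpow_def_of_pos (hpos i), mul_comm t]
    _ ≤ exp (t * ∑ i, w i * R i * log (R i) + t ^ 2 * ε ^ 2 / 8) := by
        simpa only [add_sub_cancel_left] using hhoeffding
    _ ≤ exp (t * ε ^ 2 / 2 + t ^ 2 * ε ^ 2 / 8) := by
        simp only [mul_assoc] at hkl ⊢
        gcongr
        rw [mul_div_assoc]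
        exact mul_le_mul_of_nonneg_left hkl ht

theorem sum_mul_mul_div_rpow_le {f : ι → ℝ} {ε t q : ℝ} (hε : 0 < ε) (ht : 0 ≤ t)
    (hw : ∀ i, 0 ≤ w i) (hw1 : ∑ i, w i = 1) (hf : ∀ i, 0 ≤ f i)
    (hfε : ∀ i j, f i ≤ exp ε * f j) (hq : 0 ≤ q) :
    ∑ i, w i * f i * (f i / q) ^ t
      ≤ exp (t * ε ^ 2 / 2 + t ^ 2 * ε ^ 2 / 8)
        * ((∑ i, w i * f i) * ((∑ i, w i * f i) / q) ^ t) := by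
  set m := ∑ i, w i * f i
  have hwf (i : ι) : 0 ≤ w i * f i := mul_nonneg (hw i) (hf i)
  have hm0 : 0 ≤ m := sum_nonneg fun i _ => hwf i
  rcases hm0.eq_or_lt with hm | hm
  · have hzero := (sum_eq_zero_iff_of_nonneg fun i _ => hwf i).1 hm.symm
    rw [sum_eq_zero fun i hi => by rw [hzero i hi, zero_mul]]
    exact mul_nonneg (exp_pos _).le (mul_nonneg hm0 (rpow_nonneg (div_nonneg hm0 hq) _))
  have hmean : ∑ i, w i * (f i / m) = 1 := by
    rw [← div_self hm.ne', sum_div]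
    exact sum_congr rfl fun i _ => (mul_div_assoc _ _ _).symm
  have hR (i j : ι) : f i / m ≤ exp ε * (f j / m) := by
    rw [← mul_div_assoc]; exact div_le_div_of_nonneg_right (hfε i j) hm.le
  have hscale (i : ι) : w i * f i * (f i / q) ^ t
      = m * (m / q) ^ t * (w i * (f i / m) * (f i / m) ^ t) := by
    rw [← div_mul_div_cancel₀ (a := f i) (c := q) hm.ne',
      mul_rpow (div_nonneg (hf i) hm.le) (div_nonneg hm.le hq)]
    field_simp
  rw [sum_congr rfl fun i _ => hscale i, ← mul_sum, mul_comm (exp _)]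
  gcongr
  exact sum_mul_mul_rpow_le hε ht hw hw1 hmean hR

end Weighted

theorem sum_filter_lt_le_exp_mul_sum_rpow {ι : Type*} (s : Finset ι) {p r : ι → ℝ} {t τ : ℝ}
    (hp : ∀ i, 0 ≤ p i) (hr : ∀ i, 0 ≤ r i) (ht : 0 ≤ t) :
    ∑ i ∈ s with exp τ < r i, p i ≤ exp (-(t * τ)) * ∑ i ∈ s, p i * r i ^ t := by
  rw [mul_sum]
  calc ∑ i ∈ s with exp τ < r i, p i
      ≤ ∑ i ∈ s with exp τ < r i, exp (-(t * τ)) * (p i * r i ^ t) := by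
        refine sum_le_sum fun i hi => ?_
        have hrt : exp (t * τ) ≤ r i ^ t := by
          rw [mul_comm, exp_mul]
          exact rpow_le_rpow (exp_pos τ).le (mem_filter.1 hi).2.le ht
        have hone : 1 ≤ exp (-(t * τ)) * r i ^ t := by
          rwa [exp_neg, ← div_eq_inv_mul, one_le_div (exp_pos _)]
        calc p i ≤ p i * (exp (-(t * τ)) * r i ^ t) := le_mul_of_one_le_right (hp i) hone
          _ = exp (-(t * τ)) * (p i * r i ^ t) := by ring
    _ ≤ _ := sum_le_sum_of_subset_of_nonneg (filter_subset _ _) fun i _ _ =>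
        mul_nonneg (exp_pos _).le (mul_nonneg (hp i) (rpow_nonneg (hr i) t))

namespace PMF

variable {α β γ : Type*}

theorem bind_map_apply_of_injective2 (p : PMF α) (q : α → PMF β) {g : α → β → γ}
    (hg : Function.Injective2 g) (a : α) (b : β) :
    (p.bind fun a => (q a).map (g a)) (g a b) = p a * q a b := by
  rw [bind_apply, tsum_eq_single a, map_apply, tsum_eq_single b, if_pos rfl]
  · exact fun b' hb' => if_neg fun h => hb' (hg h).2.symm
  · intro a' ha'
    rw [map_apply, ENNReal.tsum_eq_zero.2 fun b' => if_neg fun h => ha' (hg h).1.symm, mul_zero]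

theorem sum_toReal [Fintype α] (p : PMF α) : ∑ a, (p a).toReal = 1 := by
  have h := p.tsum_coe
  rw [tsum_fintype] at h
  rw [← ENNReal.toReal_sum fun a _ => p.apply_ne_top a, h, ENNReal.toReal_one]

theorem toReal_bind_apply [Fintype α] (p : PMF α) (f : α → PMF β) (b : β) :
    (p.bind f b).toReal = ∑ a, (p a).toReal * (f a b).toReal := by
  rw [bind_apply, tsum_fintype,
    ENNReal.toReal_sum fun a _ => ENNReal.mul_ne_top (p.apply_ne_top a) ((f a).apply_ne_top b)]
  simp only [ENNReal.toReal_mul]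

theorem bind_apply_le (p : PMF α) (f : α → PMF β) (a : α) (b : β) :
    p a * f a b ≤ p.bind f b := by
  rw [bind_apply]
  exact ENNReal.le_tsum a

end PMF

section PMFPair

variable {α Y : Type*}

theorem joint_apply (μ : PMF α) (A : α → PMF Y) (s : α) (y : Y) :
    joint μ A (s, y) = μ s * A s y :=
  μ.bind_map_apply_of_injective2 A (fun _ _ _ _ h => Prod.mk.inj h) s y

theorem indepProd_apply (μ : PMF α) (A : α → PMF Y) (s : α) (y : Y) :
    indepProd μ A (s, y) = μ s * μ.bind A y :=
  μ.bind_map_apply_of_injective2 (fun _ => μ.bind A) (fun _ _ _ _ h => Prod.mk.inj h) s y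

theorem joint_eq_indepProd_of_const (μ : PMF α) {A : α → PMF Y} (hA : ∀ s s', A s = A s')
    (s : α) (y : Y) : joint μ A (s, y) = indepProd μ A (s, y) := by
  have hbind : μ.bind A = A s := by
    rw [show A = fun _ => A s from funext fun s' => hA s' s, PMF.bind_const]
  rw [joint_apply, indepProd_apply, hbind]

end PMFPair

section Iid

variable {X : Type*} {n : ℕ}

theorem iid_succ_apply (P : PMF X) (x : X) (s : Fin n → X) :
    iid P (n + 1) (Fin.cons x s) = iid P n s * P x :=
  (iid P n).bind_map_apply_of_injective2 (fun _ => P)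
    (g := fun (s : Fin n → X) (x : X) => (Fin.cons x s : Fin (n + 1) → X))
    (fun _ _ _ _ h => (Fin.cons_injective2 h).symm) s x

theorem iid_succ_bind {Y : Type*} (P : PMF X) (A : (Fin (n + 1) → X) → PMF Y) :
    (iid P (n + 1)).bind A = (iid P n).bind fun s => P.bind fun x => A (Fin.cons x s) := by
  simp only [iid, PMF.bind_bind, PMF.bind_map]
  rfl

theorem Fintype.sum_fin_succ_pi [Fintype X] {M : Type*} [AddCommMonoid M]
    (f : (Fin (n + 1) → X) → M) :
    ∑ s, f s = ∑ x, ∑ s : Fin n → X, f (Fin.cons x s) := by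
  rw [← (Fin.consEquiv fun _ => X).sum_comp, Fintype.sum_prod_type]
  rfl

end Iid

section Privacy

variable {X Y : Type*} {n : ℕ}

theorem Adjacent.cons {s s' : Fin n → X} (h : Adjacent s s') (x : X) :
    Adjacent (Fin.cons x s : Fin (n + 1) → X) (Fin.cons x s') := by
  obtain ⟨i, hi⟩ := h
  refine ⟨i.succ, fun j hj => ?_⟩
  cases j using Fin.cases with
  | zero => rfl
  | succ k => exact hi k fun hk => hj (hk ▸ rfl)

theorem Adjacent.symm {s s' : Fin n → X} (h : Adjacent s s') : Adjacent s' s :=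
  let ⟨i, hi⟩ := h
  ⟨i, fun j hj => (hi j hj).symm⟩

theorem adjacent_cons_cons (s : Fin n → X) (x x' : X) :
    Adjacent (Fin.cons x s : Fin (n + 1) → X) (Fin.cons x' s) := by
  refine ⟨0, fun j hj => ?_⟩
  cases j using Fin.cases with
  | zero => exact absurd rfl hj
  | succ k => rfl

theorem adjacent_update (s : Fin n → X) (i : Fin n) (x : X) : Adjacent s (Function.update s i x) :=
  ⟨i, fun _ hj => (Function.update_of_ne hj x s).symm⟩

theorem DiffPrivate.bind_cons {A : (Fin (n + 1) → X) → PMF Y} {ε : ℝ} (hA : DiffPrivate A ε)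
    (P : PMF X) : DiffPrivate (fun s : Fin n → X => P.bind fun x => A (Fin.cons x s)) ε := by
  intro S S' h y
  simp only [PMF.bind_apply]
  rw [← ENNReal.tsum_mul_left]
  refine ENNReal.tsum_le_tsum fun x => ?_
  rw [mul_left_comm]
  gcongr
  exact hA _ _ (h.cons x) y

variable {A : (Fin n → X) → PMF Y} {ε : ℝ}

theorem DiffPrivate.toReal_le (hA : DiffPrivate A ε) {S S' : Fin n → X} (h : Adjacent S S')
    (y : Y) : (A S y).toReal ≤ exp ε * (A S' y).toReal := by
  have := ENNReal.toReal_mono (ENNReal.mul_ne_top ENNReal.ofReal_ne_top ((A S').apply_ne_top y))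
    (hA S S' h y)
  rwa [ENNReal.toReal_mul, ENNReal.toReal_ofReal (exp_pos ε).le] at this

theorem DiffPrivate.nonneg (hA : DiffPrivate A ε) (hn : 0 < n) (S : Fin n → X) : 0 ≤ ε := by
  obtain ⟨y, hy⟩ := (A S).support_nonempty
  have hpos : 0 < (A S y).toReal := ENNReal.toReal_pos hy ((A S).apply_ne_top y)
  have h := hA.toReal_le (S := S) (S' := S) ⟨⟨0, hn⟩, fun _ _ => rfl⟩ y
  rw [← one_le_exp_iff]
  nlinarith

theorem DiffPrivate.eq_of_zero (hA : DiffPrivate A 0) (S S' : Fin n → X) : A S = A S' := by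
  have hupdate (T : Fin n → X) (i : Fin n) (x : X) : A T = A (Function.update T i x) := by
    have hadj := adjacent_update T i x
    ext y
    have h := hA _ _ hadj y
    have h' := hA _ _ hadj.symm y
    rw [exp_zero, ENNReal.ofReal_one, one_mul] at h h'
    exact le_antisymm h h'
  suffices ∀ I : Finset (Fin n), ∀ T, (∀ j ∉ I, T j = S' j) → A T = A S' from
    this univ S fun j hj => absurd (mem_univ j) hj
  intro I
  induction I using Finset.induction_on with
  | empty => exact fun T hT => congrArg A (funext fun j => hT j (notMem_empty j))
  | insert i I _ ih =>
    intro T hT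
    rw [hupdate T i (S' i)]
    refine ih _ fun j hj => ?_
    by_cases hji : j = i
    · rw [hji, Function.update_self]
    · rw [Function.update_of_ne hji]
      exact hT j (by simp [hji, hj])

end Privacy

theorem approxDivLe_of_le_of_notMem {Z : Type*} {p q : PMF Z} {δ k : ℝ} (B : Set Z)
    (hB : pr p B ≤ ENNReal.ofReal δ) (hle : ∀ z ∉ B, p z ≤ 2 ^ k * q z) :
    approxDivLe p q δ k := by
  intro O _
  rw [tsub_le_iff_right]
  have hgood : pr p (O \ B) ≤ 2 ^ k * pr q O := by
    simp only [pr, PMF.toOuterMeasure_apply, ← ENNReal.tsum_mul_left]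
    refine ENNReal.tsum_le_tsum fun z => ?_
    by_cases hz : z ∈ O \ B
    · rw [Set.indicator_of_mem hz, Set.indicator_of_mem hz.1]
      exact hle z hz.2
    · rw [Set.indicator_of_notMem hz]
      exact zero_le
  calc pr p O ≤ pr p (O \ B ∪ B) := MeasureTheory.measure_mono (Set.subset_sdiff_union O B)
    _ ≤ pr p (O \ B) + pr p B := MeasureTheory.measure_union_le _ _
    _ ≤ 2 ^ k * pr q O + ENNReal.ofReal δ := add_le_add hgood hB

theorem approxDivLe_of_one_le {Z : Type*} {p q : PMF Z} {δ : ℝ} (hδ : 1 ≤ δ) (k : ℝ) :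
    approxDivLe p q δ k :=
  approxDivLe_of_le_of_notMem Set.univ
    (by rw [pr, (p.toOuterMeasure_apply_eq_one_iff _).2 (Set.subset_univ _)]
        exact ENNReal.one_le_ofReal.2 hδ)
    fun z hz => absurd (Set.mem_univ z) hz

theorem two_rpow_logb_exp_mul (τ : ℝ) :
    (2 : ℝ≥0∞) ^ (logb 2 (exp 1) * τ) = ENNReal.ofReal (exp τ) := by
  rw [← ENNReal.ofReal_ofNat 2, ENNReal.ofReal_rpow_of_pos two_pos, rpow_mul zero_le_two,
    rpow_logb two_pos (by norm_num) (exp_pos 1), exp_one_rpow]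

theorem pr_eq_ofReal_sum {Z : Type*} [Fintype Z] (p : PMF Z) (B : Set Z) [DecidablePred (· ∈ B)] :
    pr p B = ENNReal.ofReal (∑ z with z ∈ B, (p z).toReal) := by
  rw [ENNReal.ofReal_sum_of_nonneg fun _ _ => ENNReal.toReal_nonneg, pr, PMF.toOuterMeasure_apply,
    tsum_fintype, sum_filter]
  refine sum_congr rfl fun z _ => ?_
  rw [Set.indicator_apply, ENNReal.ofReal_toReal (p.apply_ne_top z)]

noncomputable def lossRatio {α Y : Type*} (μ : PMF α) (A : α → PMF Y) (s : α) (y : Y) : ℝ :=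
  (A s y).toReal / (μ.bind A y).toReal

section PrivacyLoss

variable {α Y : Type*} [Fintype α] [Fintype Y]

/-- `E[exp (t L)]` for the privacy loss `L = log (lossRatio μ A s y)`, `(s, y) ∼ joint μ A`. -/
noncomputable def privacyLossMGF (μ : PMF α) (A : α → PMF Y) (t : ℝ) : ℝ :=
  ∑ s, ∑ y, (μ s).toReal * (A s y).toReal * lossRatio μ A s y ^ t

theorem privacyLossMGF_const (μ : PMF α) (ν : PMF Y) (t : ℝ) :
    privacyLossMGF μ (fun _ => ν) t = 1 := by
  have hterm (s : α) (y : Y) : (μ s).toReal * (ν y).toReal * lossRatio μ (fun _ => ν) s y ^ t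
      = (μ s).toReal * (ν y).toReal := by
    rw [lossRatio, PMF.bind_const]
    rcases eq_or_ne (ν y).toReal 0 with h | h
    · rw [h, mul_zero, zero_mul]
    · rw [div_self h, one_rpow, mul_one]
  simp only [privacyLossMGF, hterm, ← sum_mul_sum, PMF.sum_toReal, mul_one]

end PrivacyLoss

section IidMGF

variable {X Y : Type*} [Fintype X] [Fintype Y] {ε t : ℝ}

theorem privacyLossMGF_iid_succ_le (P : PMF X) {n : ℕ} {A : (Fin (n + 1) → X) → PMF Y}
    (hA : DiffPrivate A ε) (hε : 0 < ε) (ht : 0 ≤ t) :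
    privacyLossMGF (iid P (n + 1)) A t ≤ exp (t * ε ^ 2 / 2 + t ^ 2 * ε ^ 2 / 8)
      * privacyLossMGF (iid P n) (fun s => P.bind fun x => A (Fin.cons x s)) t := by
  set A' : (Fin n → X) → PMF Y := fun s => P.bind fun x => A (Fin.cons x s)
  set q : Y → ℝ := fun y => ((iid P n).bind A' y).toReal
  have hstep (s : Fin n → X) (y : Y) :
      ∑ x, (P x).toReal * (A (Fin.cons x s) y).toReal * ((A (Fin.cons x s) y).toReal / q y) ^ t
        ≤ exp (t * ε ^ 2 / 2 + t ^ 2 * ε ^ 2 / 8)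
          * ((A' s y).toReal * ((A' s y).toReal / q y) ^ t) := by
    rw [PMF.toReal_bind_apply]
    exact sum_mul_mul_div_rpow_le hε ht (fun _ => ENNReal.toReal_nonneg) P.sum_toReal
      (fun _ => ENNReal.toReal_nonneg) (fun x x' => hA.toReal_le (adjacent_cons_cons s x x') y)
      ENNReal.toReal_nonneg
  calc privacyLossMGF (iid P (n + 1)) A t
      = ∑ s, ∑ y, (iid P n s).toReal * ∑ x, (P x).toReal * (A (Fin.cons x s) y).toReal
          * ((A (Fin.cons x s) y).toReal / q y) ^ t := by
        simp only [privacyLossMGF, lossRatio, Fintype.sum_fin_succ_pi, iid_succ_apply,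
          iid_succ_bind, ENNReal.toReal_mul, mul_sum]
        rw [sum_comm]
        refine sum_congr rfl fun s _ => ?_
        rw [sum_comm]
        exact sum_congr rfl fun y _ => sum_congr rfl fun x _ => by ring
    _ ≤ ∑ s, ∑ y, (iid P n s).toReal * (exp (t * ε ^ 2 / 2 + t ^ 2 * ε ^ 2 / 8)
          * ((A' s y).toReal * ((A' s y).toReal / q y) ^ t)) := by
        gcongr with s _ y _
        exact hstep s y
    _ = _ := by
        simp only [privacyLossMGF, lossRatio, mul_sum]
        exact sum_congr rfl fun s _ => sum_congr rfl fun y _ => by ring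

theorem privacyLossMGF_iid_le (P : PMF X) (hε : 0 < ε) (ht : 0 ≤ t) :
    ∀ {n : ℕ} {A : (Fin n → X) → PMF Y}, DiffPrivate A ε →
      privacyLossMGF (iid P n) A t ≤ exp (n * (t * ε ^ 2 / 2 + t ^ 2 * ε ^ 2 / 8))
  | 0, A, _ => by
    rw [show A = fun _ => A Fin.elim0 from funext fun s => congrArg A (Subsingleton.elim _ _),
      privacyLossMGF_const, Nat.cast_zero, zero_mul, exp_zero]
  | n + 1, A, hA => by
    calc privacyLossMGF (iid P (n + 1)) A t
        ≤ exp (t * ε ^ 2 / 2 + t ^ 2 * ε ^ 2 / 8) * exp (n * (t * ε ^ 2 / 2 + t ^ 2 * ε ^ 2 / 8)) :=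
          (privacyLossMGF_iid_succ_le P hA hε ht).trans
            (by gcongr; exact privacyLossMGF_iid_le P hε ht (hA.bind_cons P))
      _ = exp ((n + 1 : ℕ) * (t * ε ^ 2 / 2 + t ^ 2 * ε ^ 2 / 8)) := by
          rw [← exp_add]; push_cast; ring_nf

end IidMGF

section MaxInfo

variable {α Y : Type*} {μ : PMF α} {A : α → PMF Y} {β : ℝ}

theorem approxMaxInfoLe_of_const (hA : ∀ s s', A s = A s') {k : ℝ} (hk : 0 ≤ k) :
    approxMaxInfoLe μ A β k := by
  refine approxDivLe_of_le_of_notMem ∅ (by simp [pr]) fun ⟨s, y⟩ _ => ?_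
  rw [joint_eq_indepProd_of_const μ hA]
  calc indepProd μ A (s, y) = 1 * indepProd μ A (s, y) := (one_mul _).symm
    _ ≤ 2 ^ k * indepProd μ A (s, y) := by
      gcongr
      simpa using ENNReal.rpow_le_rpow_of_exponent_le one_le_two hk

theorem joint_le_of_lossRatio_le {c : ℝ} {s : α} {y : Y}
    (h : lossRatio μ A s y ≤ c) :
    joint μ A (s, y) ≤ ENNReal.ofReal c * indepProd μ A (s, y) := by
  rw [joint_apply, indepProd_apply, mul_left_comm]
  -- where the marginal vanishes `lossRatio` is `0` by the `x / 0 = 0` convention, but then so is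
  -- the joint law
  rcases eq_or_ne (μ.bind A y) 0 with hq | hq
  · rw [nonpos_iff_eq_zero.1 ((μ.bind_apply_le A s y).trans_eq hq)]
    exact zero_le
  gcongr
  have hqpos : 0 < (μ.bind A y).toReal := ENNReal.toReal_pos hq (PMF.apply_ne_top _ _)
  rw [← ENNReal.ofReal_toReal ((A s).apply_ne_top y),
    ← ENNReal.ofReal_toReal ((μ.bind A).apply_ne_top y),
    ← ENNReal.ofReal_mul' ENNReal.toReal_nonneg]
  exact ENNReal.ofReal_le_ofReal ((div_le_iff₀ hqpos).1 h)

theorem pr_joint_lossRatio_gt_le [Fintype α] [Fintype Y] {t τ : ℝ} (ht : 0 ≤ t) :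
    pr (joint μ A) {z | exp τ < lossRatio μ A z.1 z.2}
      ≤ ENNReal.ofReal (exp (-(t * τ)) * privacyLossMGF μ A t) := by
  classical
  have hmgf : privacyLossMGF μ A t
      = ∑ z : α × Y, (joint μ A z).toReal * lossRatio μ A z.1 z.2 ^ t := by
    simp only [privacyLossMGF, Fintype.sum_prod_type, joint_apply, ENNReal.toReal_mul]
  rw [pr_eq_ofReal_sum, hmgf]
  refine ENNReal.ofReal_le_ofReal ?_
  exact sum_filter_lt_le_exp_mul_sum_rpow univ (fun _ => ENNReal.toReal_nonneg)
    (fun _ => div_nonneg ENNReal.toReal_nonneg ENNReal.toReal_nonneg) ht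

theorem approxMaxInfoLe_of_privacyLossMGF_le [Fintype α] [Fintype Y] {t τ : ℝ} (ht : 0 ≤ t)
    (h : exp (-(t * τ)) * privacyLossMGF μ A t ≤ β) :
    approxMaxInfoLe μ A β (logb 2 (exp 1) * τ) :=
  approxDivLe_of_le_of_notMem _ ((pr_joint_lossRatio_gt_le ht).trans (ENNReal.ofReal_le_ofReal h))
    fun _ hz => two_rpow_logb_exp_mul τ ▸ joint_le_of_lossRatio_le (not_lt.1 hz)

end MaxInfo

theorem chernoff_exponent_eq {ε N L t : ℝ} (hε : 0 < ε) (hN : 0 < N) (hL : 0 ≤ L)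
    (ht : t = 2 * sqrt (2 * L / N) / ε) :
    -(t * (ε ^ 2 * N / 2 + ε * sqrt (N * L / 2))) + N * (t * ε ^ 2 / 2 + t ^ 2 * ε ^ 2 / 8)
      = -L := by
  have hsq : sqrt (2 * L / N) ^ 2 * N = 2 * L := by
    rw [sq_sqrt (by positivity), div_mul_cancel₀ _ hN.ne']
  have hprod : sqrt (2 * L / N) * sqrt (N * L / 2) = L := by
    rw [← sqrt_mul (by positivity), show 2 * L / N * (N * L / 2) = L ^ 2 by field_simp,
      sqrt_sq hL]
  subst ht
  generalize sqrt (2 * L / N) = a at hsq hprod ⊢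
  generalize sqrt (N * L / 2) = b at hprod ⊢
  field_simp
  linear_combination (-16 : ℝ) * hprod + 4 * hsq

theorem approxMaxInfoLe_iid {X Y : Type*} [Fintype X] [Fintype Y] {n : ℕ} (P : PMF X)
    {A : (Fin n → X) → PMF Y} {ε β : ℝ} (hA : DiffPrivate A ε) (hε : 0 < ε) (hn : 0 < n)
    (hβ : 0 < β) (hβ2 : β < 2) :
    approxMaxInfoLe (iid P n) A β
      (logb 2 (exp 1) * (ε ^ 2 * n / 2 + ε * sqrt (n * log (2 / β) / 2))) := by
  have hL : 0 < log (2 / β) := log_pos ((one_lt_div hβ).2 hβ2)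
  -- minimises the Chernoff exponent `n (t ε² / 2 + t² ε² / 8) - t τ`; the minimum is `-log (2 / β)`
  set t := 2 * sqrt (2 * log (2 / β) / n) / ε with ht
  have ht0 : 0 ≤ t := by positivity
  refine approxMaxInfoLe_of_privacyLossMGF_le ht0 ?_
  calc exp (-(t * (ε ^ 2 * n / 2 + ε * sqrt (n * log (2 / β) / 2)))) * privacyLossMGF (iid P n) A t
      ≤ exp (-(t * (ε ^ 2 * n / 2 + ε * sqrt (n * log (2 / β) / 2))))
          * exp (n * (t * ε ^ 2 / 2 + t ^ 2 * ε ^ 2 / 8)) := by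
        gcongr
        exact privacyLossMGF_iid_le P hε ht0 hA
    _ = exp (-log (2 / β)) := by
        rw [← exp_add, chernoff_exponent_eq hε (Nat.cast_pos.2 hn) hL.le ht]
    _ ≤ β := by
        rw [exp_neg, exp_log (by positivity), inv_div]
        linarith

/-- for an ε-differentially private algorithm `A` and a dataset `S`
of `n` i.i.d. samples from `𝒫`, for any `β > 0`,
`I_∞^β(S; A(S)) ≤ (log₂ e) · (ε² n / 2 + ε √(n ln(2/β) / 2))`. -/
theorem approxMaxInfo_of_pure_dp_iid
    {X Y : Type*} [Fintype X] [Fintype Y] {n : ℕ}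
    (P : PMF X) (A : (Fin n → X) → PMF Y) (ε : ℝ) (hA : DiffPrivate A ε)
    (β : ℝ) (hβ : 0 < β) :
    approxMaxInfoLe (iid P n) A β
      (Real.logb 2 (Real.exp 1) *
        (ε ^ 2 * n / 2 + ε * Real.sqrt (n * Real.log (2 / β) / 2))) := by
  rcases le_or_gt 2 β with hβ2 | hβ2
  · exact approxDivLe_of_one_le (by linarith) _
  rcases n.eq_zero_or_pos with rfl | hn
  · exact approxMaxInfoLe_of_const (fun s s' => congrArg A (Subsingleton.elim s s')) (by simp)
  obtain ⟨S, -⟩ := (iid P n).support_nonempty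
  rcases (hA.nonneg hn S).eq_or_lt with rfl | hε
  · exact approxMaxInfoLe_of_const hA.eq_of_zero (by simp)
  exact approxMaxInfoLe_iid P hA hε hn hβ hβ2
end

section
/- Fix n, m, B with B ≤ m and fix i ∈ [m]. Let 𝒴_i denote the set of binary strings of length i−1 containing at most B ones, and let ℓ_i = |𝒴_i| = ∑_{j=0}^{min(i−1,B)} C(i−1, j); note ℓ_i ≤ m^B. Let S be a random dataset over 𝒳^n. Suppose that to each transcript y ∈ 𝒴_i there is associated a query ψ_y : 𝒳^n → {0,1} such that for every y ∈ 𝒴_i, Pr[ψ_y(S) = 1] ≤ β_i. Then for any (possibly randomized) transcript map T : 𝒳^n → 𝒴_i, Pr[ ψ_{T(S)}(S) = 1 ] ≤ ℓ_i · β_i. (This is the guarantee of the SparseValidate mechanism: the transcript of an analyst interacting with SparseValidate(m, B) up to its i-th query is a binary string of length i−1 with at most B ones, so the i-th adaptively chosen query of any analyst satisfies Pr[ψ_i(S)=1] ≤ ℓ_i β_i whenever every query the analyst could issue satisfies the marginal bound β_i.) -/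
open scoped ENNReal

/-- The transcripts of an interaction with `SparseValidate(m, B)` up to the `i`-th
query: binary strings of length `i − 1` containing at most `B` ones. -/
abbrev Transcript (i B : ℕ) : Type :=
  {y : Fin (i - 1) → Bool // (Finset.univ.filter fun j => y j = true).card ≤ B}

/-- `ℓ_i = ∑_{j=0}^{min(i−1,B)} C(i−1, j)`. -/
def sparseCount (i B : ℕ) : ℕ :=
  ∑ j ∈ Finset.range (min (i - 1) B + 1), (i - 1).choose j

/-- Boolean functions on `Fin k` correspond to finsets. -/
def funBoolEquivFinset (k : ℕ) : (Fin k → Bool) ≃ Finset (Fin k) where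
  toFun y := Finset.univ.filter fun j => y j = true
  invFun s := fun j => decide (j ∈ s)
  left_inv y := by funext j; simp
  right_inv s := by ext j; simp

lemma card_finset_card_le (k B : ℕ) :
    Fintype.card {s : Finset (Fin k) // s.card ≤ B}
      = ∑ j ∈ Finset.range (B + 1), k.choose j := by
  rw [Fintype.card_subtype]
  rw [Finset.card_eq_sum_card_fiberwise
    (f := Finset.card) (t := Finset.range (B + 1))
    (fun s hs => by simp_all [Nat.lt_succ_iff])]
  refine Finset.sum_congr rfl fun j hj => ?_
  simp only [Finset.mem_range, Nat.lt_succ_iff] at hj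
  rw [Finset.filter_filter]
  have h : ((Finset.univ : Finset (Finset (Fin k))).filter
      fun s => s.card ≤ B ∧ s.card = j) = Finset.powersetCard j Finset.univ := by
    rw [Finset.powersetCard_eq_filter, Finset.powerset_univ]
    apply Finset.filter_congr
    intro s _
    constructor
    · exact fun h => h.2
    · exact fun h => ⟨h ▸ hj, h⟩
  rw [h, Finset.card_powersetCard, Finset.card_univ, Fintype.card_fin]

lemma sum_choose_eq_sum_choose_min (k B : ℕ) :
    ∑ j ∈ Finset.range (min k B + 1), k.choose j
      = ∑ j ∈ Finset.range (B + 1), k.choose j := by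
  refine Finset.sum_subset ?_ ?_
  · exact Finset.range_subset_range.2 (by omega)
  · intro j hj hj'
    simp only [Finset.mem_range] at hj hj'
    exact Nat.choose_eq_zero_of_lt (by omega)

lemma sum_choose_le_pow (k B : ℕ) :
    ∑ j ∈ Finset.range (B + 1), k.choose j ≤ (k + 1) ^ B := by
  induction B with
  | zero => simp
  | succ B ih =>
    rw [Finset.sum_range_succ, pow_succ]
    have h1 : k.choose (B + 1) ≤ k * (k + 1) ^ B := by
      calc k.choose (B + 1) ≤ k ^ (B + 1) := Nat.choose_le_pow _ _
        _ = k ^ B * k := pow_succ k B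
        _ ≤ (k + 1) ^ B * k :=
            Nat.mul_le_mul_right k (Nat.pow_le_pow_left (Nat.le_succ k) B)
        _ = k * (k + 1) ^ B := Nat.mul_comm _ _
    calc ∑ j ∈ Finset.range (B + 1), k.choose j + k.choose (B + 1)
        ≤ (k + 1) ^ B + k * (k + 1) ^ B := Nat.add_le_add ih h1
      _ = (k + 1) ^ B * (k + 1) := by ring

lemma pmf_union_bound {A Y : Type*} [Fintype Y] (μ : PMF A) (T : A → PMF Y)
    (ψ : Y → A → Bool) (c : ℝ≥0∞)
    (hψ : ∀ y, pr μ {S | ψ y S = true} ≤ c) :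
    pr (joint μ T) {p : A × Y | ψ p.2 p.1 = true}
      ≤ (Fintype.card Y : ℝ≥0∞) * c := by
  have hmarg : (joint μ T).map Prod.fst = μ := by
    simp only [joint, PMF.map_bind]
    have h1 : ∀ a, ((T a).map fun b => (a, b)).map Prod.fst = PMF.pure a := by
      intro a
      rw [PMF.map_comp]
      exact PMF.map_const (T a) a
    simp_rw [h1]
    exact PMF.bind_pure μ
  have hsub : {p : A × Y | ψ p.2 p.1 = true}
      ⊆ ⋃ y : Y, ({a | ψ y a = true} ×ˢ ({y} : Set Y)) := by
    rintro ⟨a, b⟩ h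
    exact Set.mem_iUnion.2 ⟨b, h, rfl⟩
  calc pr (joint μ T) {p : A × Y | ψ p.2 p.1 = true}
      ≤ (joint μ T).toOuterMeasure (⋃ y : Y, ({a | ψ y a = true} ×ˢ ({y} : Set Y))) :=
        (joint μ T).toOuterMeasure.mono hsub
    _ ≤ ∑ y : Y, (joint μ T).toOuterMeasure ({a | ψ y a = true} ×ˢ ({y} : Set Y)) :=
        MeasureTheory.measure_iUnion_fintype_le _ _
    _ ≤ ∑ _y : Y, c := by
        refine Finset.sum_le_sum fun y _ => ?_
        calc (joint μ T).toOuterMeasure ({a | ψ y a = true} ×ˢ ({y} : Set Y))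
            ≤ (joint μ T).toOuterMeasure (Prod.fst ⁻¹' {a | ψ y a = true}) := by
              apply (joint μ T).toOuterMeasure.mono
              rintro ⟨a, b⟩ ⟨h1, _⟩
              exact h1
          _ = ((joint μ T).map Prod.fst).toOuterMeasure {a | ψ y a = true} :=
              (PMF.toOuterMeasure_map_apply _ _ _).symm
          _ = μ.toOuterMeasure {a | ψ y a = true} := by rw [hmarg]
          _ ≤ c := hψ y
    _ = (Fintype.card Y : ℝ≥0∞) * c := by
        rw [Finset.sum_const, Finset.card_univ, nsmul_eq_mul]

/-- the SparseValidate guarantee.  Fix `n, m, B` with `B ≤ m` and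
`i ∈ [m]`.  The set `𝒴_i` of transcripts has size `ℓ_i = ∑_{j=0}^{min(i−1,B)} C(i−1,j)`,
and `ℓ_i ≤ m^B`.  If to each transcript `y ∈ 𝒴_i` there is associated a query
`ψ_y : 𝒳^n → {0,1}` with `Pr[ψ_y(S) = 1] ≤ β_i` over the random dataset `S`, then for
any (possibly randomized) transcript map `T : 𝒳^n → 𝒴_i`,
`Pr[ ψ_{T(S)}(S) = 1 ] ≤ ℓ_i · β_i`. -/
theorem sparseValidate_guarantee
    {X : Type*} {n m B i : ℕ} (hB : B ≤ m) (hi : 1 ≤ i) (him : i ≤ m)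
    (μ : PMF (Fin n → X)) (βi : ℝ)
    (ψ : Transcript i B → (Fin n → X) → Bool)
    (hψ : ∀ y : Transcript i B, pr μ {S | ψ y S = true} ≤ ENNReal.ofReal βi)
    (T : (Fin n → X) → PMF (Transcript i B)) :
    Fintype.card (Transcript i B) = sparseCount i B ∧
    sparseCount i B ≤ m ^ B ∧
    pr (joint μ T) {p : (Fin n → X) × Transcript i B | ψ p.2 p.1 = true}
      ≤ (sparseCount i B : ℝ≥0∞) * ENNReal.ofReal βi := by
  have hcard : Fintype.card (Transcript i B) = sparseCount i B := by
    have e : Transcript i B ≃ {s : Finset (Fin (i - 1)) // s.card ≤ B} :=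
      Equiv.subtypeEquiv (funBoolEquivFinset (i - 1)) (fun y => Iff.rfl)
    rw [Fintype.card_congr e, card_finset_card_le, sparseCount,
      sum_choose_eq_sum_choose_min]
  refine ⟨hcard, ?_, ?_⟩
  · calc sparseCount i B = ∑ j ∈ Finset.range (B + 1), (i - 1).choose j :=
          sum_choose_eq_sum_choose_min _ _
      _ ≤ (i - 1 + 1) ^ B := sum_choose_le_pow _ _
      _ = i ^ B := by rw [Nat.sub_add_cancel hi]
      _ ≤ m ^ B := Nat.pow_le_pow_left him B
  · rw [← hcard]
    exact pmf_union_bound μ T ψ _ hψ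
end
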